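/- Let h, g : ℤ → ℝ be finitely supported filters with ∑_{l∈ℤ} h_l = 0 and ∑_{l∈ℤ} g_l = 1. Then the wavelet packet filter coefficient sums satisfy, for every m ≥ 1: ∑_{l∈ℤ} v_{m,0,l} = 1, and ∑_{l∈ℤ} v_{m,n,l} = 0 for every 1 ≤ n ≤ 2^m − 1. (In particular every band-pass MODWPT component with n ≥ 1 annihilates constant input.) -/
import Mathlib


open MeasureTheory ProbabilityTheory Filter

/-- Filter selector `u_n`: equals `g` if `n mod 4 ∈ {0,3}` and `h` if `n mod 4 ∈ {1,2}`. -/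
noncomputable def uF (g h : ℤ → ℝ) (n : ℕ) : ℤ → ℝ :=
  fun l => if n % 4 = 0 ∨ n % 4 = 3 then g l else h l

/-- MODWPT wavelet packet filters `v_{m,n}`, defined recursively by `v_{1,0} = g`,
`v_{1,1} = h`, and `v_{m,n,l} = ∑_k u_{n,k} v_{m-1, ⌊n/2⌋, l - 2^(m-1) k}`. -/
noncomputable def wp (g h : ℤ → ℝ) : ℕ → ℕ → ℤ → ℝ
  | 0, _, _ => 0
  | 1, n, l => if n = 0 then g l else h l
  | (m + 2), n, l => ∑ᶠ k : ℤ, uF g h n k * wp g h (m + 1) (n / 2) (l - 2 ^ (m + 1) * k)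

section Aux

variable (u v : ℤ → ℝ) (c : ℤ)

/-- Support of the convolution-type expression is contained in an explicit finset. -/
lemma conv_support_subset (hu : (Function.support u).Finite)
    (hv : (Function.support v).Finite) :
    Function.support (fun l => ∑ᶠ k : ℤ, u k * v (l - c * k)) ⊆
      ↑(hu.toFinset.biUnion (fun k => hv.toFinset.image (fun x => x + c * k))) := by
  intro l hl
  by_contra hW
  apply hl
  apply finsum_eq_zero_of_forall_eq_zero
  intro k
  by_cases hk : u k = 0
  · simp [hk]
  by_cases hvk : v (l - c * k) = 0
  · simp [hvk]
  exact absurd (Finset.mem_coe.2 (Finset.mem_biUnion.2 ⟨k, hu.mem_toFinset.2 hk,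
    Finset.mem_image.2 ⟨l - c * k, hv.mem_toFinset.2 hvk, by ring⟩⟩)) hW

lemma conv_support_finite (hu : (Function.support u).Finite)
    (hv : (Function.support v).Finite) :
    (Function.support (fun l => ∑ᶠ k : ℤ, u k * v (l - c * k))).Finite :=
  Set.Finite.subset (Finset.finite_toSet _) (conv_support_subset u v c hu hv)

/-- The convolution-type double sum factors. -/
lemma conv_sum (hu : (Function.support u).Finite) (hv : (Function.support v).Finite) :
    ∑ᶠ l : ℤ, (∑ᶠ k : ℤ, u k * v (l - c * k)) = (∑ᶠ k, u k) * (∑ᶠ l, v l) := by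
  set U := hu.toFinset
  set V := hv.toFinset
  set W := U.biUnion (fun k => V.image (fun x => x + c * k)) with hWdef
  rw [finsum_eq_sum_of_support_subset _ (conv_support_subset u v c hu hv)]
  have hinner : ∀ l : ℤ, ∑ᶠ k : ℤ, u k * v (l - c * k) = ∑ k ∈ U, u k * v (l - c * k) := by
    intro l
    apply finsum_eq_sum_of_support_subset
    intro k hk
    simp only [Function.mem_support] at hk
    have : u k ≠ 0 := fun h0 => hk (by simp [h0])
    exact hu.mem_toFinset.2 this
  simp_rw [hinner]
  rw [Finset.sum_comm]
  have hterm : ∀ k ∈ U, ∑ l ∈ W, u k * v (l - c * k) = u k * ∑ᶠ l, v l := by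
    intro k hk
    rw [← Finset.mul_sum]
    congr 1
    have hsub : Function.support (fun l => v (l - c * k)) ⊆ ↑W := by
      intro l hl
      simp only [Function.mem_support] at hl
      exact Finset.mem_coe.2 (Finset.mem_biUnion.2 ⟨k, hk,
        Finset.mem_image.2 ⟨l - c * k, hv.mem_toFinset.2 hl, by ring⟩⟩)
    rw [← finsum_eq_sum_of_support_subset _ hsub]
    exact finsum_comp (fun l => l - c * k) (Equiv.subRight (c * k)).bijective
  rw [Finset.sum_congr rfl hterm, ← Finset.sum_mul]
  congr 1
  symm
  apply finsum_eq_sum_of_support_subset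
  intro k hk
  exact hu.mem_toFinset.2 hk

end Aux

lemma uF_support_finite (g h : ℤ → ℝ) (hhfin : (Function.support h).Finite)
    (hgfin : (Function.support g).Finite) (n : ℕ) :
    (Function.support (uF g h n)).Finite := by
  by_cases hc : n % 4 = 0 ∨ n % 4 = 3
  · have : uF g h n = g := funext fun l => if_pos hc
    rw [this]; exact hgfin
  · have : uF g h n = h := funext fun l => if_neg hc
    rw [this]; exact hhfin

lemma wp_support_finite (g h : ℤ → ℝ) (hhfin : (Function.support h).Finite)
    (hgfin : (Function.support g).Finite) :
    ∀ m n, (Function.support (wp g h m n)).Finite := by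
  intro m
  induction m with
  | zero => intro n; simp [wp, Function.support]
  | succ m ih =>
    intro n
    match m with
    | 0 =>
      by_cases hn : n = 0
      · have : wp g h 1 n = g := funext fun l => by simp [wp, hn]
        rw [this]; exact hgfin
      · have : wp g h 1 n = h := funext fun l => by simp [wp, hn]
        rw [this]; exact hhfin
    | m + 1 =>
      have : wp g h (m + 2) n =
          fun l => ∑ᶠ k : ℤ, uF g h n k * wp g h (m + 1) (n / 2) (l - 2 ^ (m + 1) * k) :=
        funext fun l => by rw [wp]
      rw [this]
      exact conv_support_finite _ _ _ (uF_support_finite g h hhfin hgfin n) (ih (n / 2))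

/-- If `∑ h_l = 0` and `∑ g_l = 1` for finitely supported filters, then at
every scale `m ≥ 1` the wavelet packet filter coefficient sums satisfy
`∑_l v_{m,0,l} = 1` and `∑_l v_{m,n,l} = 0` for every `1 ≤ n ≤ 2^m - 1`. -/
theorem stmt16 (h g : ℤ → ℝ)
    (hhfin : (Function.support h).Finite) (hgfin : (Function.support g).Finite)
    (hsum_h : ∑ᶠ l : ℤ, h l = 0) (hsum_g : ∑ᶠ l : ℤ, g l = 1)
    (m : ℕ) (hm : 1 ≤ m) :
    (∑ᶠ l : ℤ, wp g h m 0 l = 1)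
    ∧ (∀ n : ℕ, 1 ≤ n → n ≤ 2 ^ m - 1 → ∑ᶠ l : ℤ, wp g h m n l = 0) := by
  have main : ∀ m : ℕ, (∑ᶠ l : ℤ, wp g h (m + 1) 0 l = 1)
      ∧ (∀ n : ℕ, 1 ≤ n → n ≤ 2 ^ (m + 1) - 1 → ∑ᶠ l : ℤ, wp g h (m + 1) n l = 0) := by
    intro m
    induction m with
    | zero =>
      constructor
      · simpa [wp] using hsum_g
      · intro n hn1 _
        have hn0 : n ≠ 0 := by omega
        have : wp g h 1 n = h := funext fun l => by simp [wp, hn0]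
        rw [this]; exact hsum_h
    | succ m ih =>
      have hkey : ∀ n : ℕ, ∑ᶠ l : ℤ, wp g h (m + 2) n l =
          (∑ᶠ k, uF g h n k) * (∑ᶠ l, wp g h (m + 1) (n / 2) l) := by
        intro n
        have hrw : (fun l => wp g h (m + 2) n l) =
            fun l => ∑ᶠ k : ℤ, uF g h n k * wp g h (m + 1) (n / 2) (l - 2 ^ (m + 1) * k) :=
          funext fun l => by rw [wp]
        calc ∑ᶠ l : ℤ, wp g h (m + 2) n l
            = ∑ᶠ l : ℤ, ∑ᶠ k : ℤ, uF g h n k * wp g h (m + 1) (n / 2) (l - 2 ^ (m + 1) * k) := by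
              rw [hrw]
          _ = _ := conv_sum _ _ _ (uF_support_finite g h hhfin hgfin n)
                (wp_support_finite g h hhfin hgfin (m + 1) (n / 2))
      have hsum_uF : ∀ n : ℕ, ∑ᶠ k, uF g h n k =
          if n % 4 = 0 ∨ n % 4 = 3 then 1 else 0 := by
        intro n
        by_cases hc : n % 4 = 0 ∨ n % 4 = 3
        · have : uF g h n = g := funext fun l => if_pos hc
          simp [this, hc, hsum_g]
        · have : uF g h n = h := funext fun l => if_neg hc
          simp [this, hc, hsum_h]
      constructor
      · rw [hkey 0, hsum_uF 0]
        simp [ih.1]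
      · intro n hn1 hn2
        rw [hkey n, hsum_uF n]
        by_cases hc : n % 4 = 0 ∨ n % 4 = 3
        · rw [if_pos hc, one_mul]
          have h1 : 1 ≤ n / 2 := by omega
          have h2 : n / 2 ≤ 2 ^ (m + 1) - 1 := by
            have hle : n ≤ 2 ^ (m + 2) - 1 := hn2
            have hp : 2 ^ (m + 2) = 2 * 2 ^ (m + 1) := by ring
            have hpos : 1 ≤ 2 ^ (m + 1) := Nat.one_le_two_pow
            omega
          exact ih.2 (n / 2) h1 h2
        · rw [if_neg hc, zero_mul]
  obtain ⟨m, rfl⟩ : ∃ k, m = k + 1 := ⟨m - 1, by omega⟩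
  exact main m
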